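/- arXiv:1202.6175 — 3 statements merged into one kernel-verified Lean document; each statement's English description precedes it below -/
import Mathlib

section
/- For the exponential integral E_1(x) = ∫_x^∞ e^{-t}/t dt, the limit as x → 0⁺ of E_1(x) + ln(x) equals -γ, where γ is the Euler–Mascheroni constant. -/
/-!
Integrating by parts, `E₁(x) + log x = (1 - e^{-x}) log x + ∫_x^∞ e^{-t} log t dt` for `x > 0`.
As `x → 0⁺` the boundary term vanishes, since `0 ≤ 1 - e^{-x} ≤ x`, and the integral tends to
`∫_0^∞ e^{-t} log t dt = Γ'(1) = -γ`.
-/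

open MeasureTheory Real Filter

/-- The exponential integral `E₁(x) = ∫_x^∞ e^{-t}/t dt`. -/
noncomputable def E1 (x : ℝ) : ℝ := ∫ t in Set.Ioi x, Real.exp (-t) / t

open Set Topology

lemma abs_log_le_two_mul_rpow_neg_half_add_self {t : ℝ} (ht : 0 < t) :
    |log t| ≤ 2 * t ^ (-1 / 2 : ℝ) + t := by
  have h_rpow : 0 < t ^ (-1 / 2 : ℝ) := rpow_pos_of_pos ht _
  rcases le_total t 1 with ht1 | ht1
  · have h := log_le_rpow_div (inv_pos.2 ht).le (by norm_num : (0 : ℝ) < 1 / 2)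
    rw [log_inv, inv_rpow ht.le, ← rpow_neg ht.le] at h
    rw [abs_of_nonpos (log_nonpos ht.le ht1)]
    linarith
  · rw [abs_of_nonneg (log_nonneg ht1)]
    linarith [log_le_sub_one_of_pos ht]

lemma integrableOn_exp_neg_mul_log : IntegrableOn (fun t => exp (-t) * log t) (Ioi 0) := by
  have h_dom : IntegrableOn (fun t => 2 * (exp (-t) * t ^ ((1 / 2 : ℝ) - 1))
      + exp (-t) * t ^ ((2 : ℝ) - 1)) (Ioi 0) :=
    ((GammaIntegral_convergent (by norm_num)).const_mul 2).add
      (GammaIntegral_convergent (by norm_num))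
  refine h_dom.mono' (by fun_prop) ?_
  filter_upwards [ae_restrict_mem measurableSet_Ioi] with t (ht : 0 < t)
  calc ‖exp (-t) * log t‖ = exp (-t) * |log t| := by
        rw [norm_mul, norm_of_nonneg (exp_pos _).le, norm_eq_abs]
    _ ≤ exp (-t) * (2 * t ^ (-1 / 2 : ℝ) + t) := by
        gcongr; exact abs_log_le_two_mul_rpow_neg_half_add_self ht
    _ = _ := by norm_num; ring

lemma integral_exp_neg_mul_log : ∫ t in Ioi 0, exp (-t) * log t = -eulerMascheroniConstant := by
  have h_Gamma : Complex.Gamma =ᶠ[𝓝 1] Complex.GammaIntegral := by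
    filter_upwards [(Complex.continuous_re.isOpen_preimage _ isOpen_Ioi).mem_nhds
      (by norm_num : (1 : ℂ) ∈ Complex.re ⁻¹' Ioi 0)] with s hs
    exact Complex.Gamma_eq_integral hs
  have h_deriv := ((Complex.hasDerivAt_GammaIntegral (by norm_num)).congr_of_eventuallyEq
    h_Gamma).unique Complex.hasDerivAt_Gamma_one
  simp_rw [sub_self, Complex.cpow_zero, one_mul, ← Complex.ofReal_mul,
    integral_complex_ofReal] at h_deriv
  simpa only [mul_comm] using (by exact_mod_cast h_deriv :
    ∫ t in Ioi 0, log t * exp (-t) = -eulerMascheroniConstant)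

lemma tendsto_setIntegral_Ioi_nhdsGT {E : Type*} [NormedAddCommGroup E] [NormedSpace ℝ E]
    {f : ℝ → E} {a : ℝ} (hf : IntegrableOn f (Ioi a)) :
    Tendsto (fun x => ∫ t in Ioi x, f t) (𝓝[>] a) (𝓝 (∫ t in Ioi a, f t)) := by
  have h_int : IntervalIntegrable f volume (min a a) (max a (a + 1)) := by
    rw [min_self, max_eq_right (by linarith),
      intervalIntegrable_iff_integrableOn_Ioc_of_le (by linarith)]
    exact hf.mono_set Ioc_subset_Ioi_self
  have h_prim : Tendsto (fun x => ∫ t in a..x, f t) (𝓝[>] a) (𝓝 0) := by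
    simpa using ((intervalIntegral.continuousWithinAt_primitive (by simp) h_int)
      |>.mono_of_mem_nhdsWithin (Icc_mem_nhdsGT (lt_add_one a))).tendsto
  have h_lim := (tendsto_const_nhds (x := ∫ t in Ioi a, f t)).sub h_prim
  rw [sub_zero] at h_lim
  refine h_lim.congr' ?_
  filter_upwards [self_mem_nhdsWithin] with x (hx : a < x)
  rw [← intervalIntegral.integral_Ioi_sub_Ioi hf hx.le, sub_sub_cancel]

lemma tendsto_one_sub_exp_neg_mul_log_nhdsGT_zero :
    Tendsto (fun x => (1 - exp (-x)) * log x) (𝓝[>] 0) (𝓝 0) := by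
  have h_lim : Tendsto (fun x => ‖log x * x ^ (1 : ℝ)‖) (𝓝[>] 0) (𝓝 0) := by
    simpa using (tendsto_log_mul_rpow_nhdsGT_zero one_pos).norm
  refine squeeze_zero_norm' ?_ h_lim
  filter_upwards [self_mem_nhdsWithin] with x (hx : 0 < x)
  have h_lower : 0 ≤ 1 - exp (-x) := by simp [exp_le_one_iff, hx.le]
  have h_upper : 1 - exp (-x) ≤ x := by linarith [add_one_le_exp (-x)]
  rw [rpow_one, norm_mul, norm_mul, norm_of_nonneg h_lower, norm_of_nonneg hx.le, mul_comm]
  exact mul_le_mul_of_nonneg_left h_upper (norm_nonneg _)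

lemma tendsto_exp_neg_mul_log_atTop : Tendsto (fun t => exp (-t) * log t) atTop (𝓝 0) := by
  have h := isLittleO_log_id_atTop.trans ((isLittleO_pow_exp_atTop (n := 1)).congr_left pow_one)
  simpa [exp_neg, div_eq_inv_mul] using h.tendsto_div_nhds_zero

lemma integrableOn_exp_neg_div_Ioi {x : ℝ} (hx : 0 < x) :
    IntegrableOn (fun t => exp (-t) / t) (Ioi x) := by
  refine ((exp_neg_integrableOn_Ioi x one_pos).const_mul x⁻¹).mono'
    (by fun_prop : Measurable fun t => exp (-t) / t).aestronglyMeasurable ?_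
  filter_upwards [ae_restrict_mem measurableSet_Ioi] with t (ht : x < t)
  rw [norm_div, norm_of_nonneg (exp_pos _).le, norm_of_nonneg (hx.trans ht).le, neg_one_mul,
    div_eq_mul_inv, mul_comm]
  gcongr

lemma E1_eq_integral_exp_neg_mul_log_sub {x : ℝ} (hx : 0 < x) :
    E1 x = (∫ t in Ioi x, exp (-t) * log t) - exp (-x) * log x := by
  have h_exp (t : ℝ) : HasDerivAt (fun t => exp (-t)) (-exp (-t)) t := by
    simpa using (hasDerivAt_neg t).exp
  have h_log : ∀ t ∈ Ioi x, HasDerivAt log t⁻¹ t := fun t ht ↦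
    hasDerivAt_log (hx.trans ht).ne'
  have h_cont : ContinuousAt (fun t => exp (-t) * log t) x := by
    fun_prop (disch := exact hx.ne')
  have h_ibp := integral_Ioi_mul_deriv_eq_deriv_mul (u := fun t => exp (-t))
    (fun t _ => h_exp t) h_log
    (by simpa [Pi.mul_def, div_eq_mul_inv] using integrableOn_exp_neg_div_Ioi hx)
    (by simpa [Pi.mul_def, neg_mul] using
      (integrableOn_exp_neg_mul_log.mono_set (Ioi_subset_Ioi hx.le)).neg)
    h_cont.continuousWithinAt.tendsto tendsto_exp_neg_mul_log_atTop
  simp only [E1, div_eq_mul_inv, h_ibp, neg_mul, integral_neg]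
  ring

theorem stmt0 :
    Tendsto (fun x : ℝ => E1 x + Real.log x) (nhdsWithin 0 (Set.Ioi 0))
      (nhds (-Real.eulerMascheroniConstant)) := by
  have h_lim := tendsto_one_sub_exp_neg_mul_log_nhdsGT_zero.add
    (tendsto_setIntegral_Ioi_nhdsGT integrableOn_exp_neg_mul_log)
  rw [zero_add, integral_exp_neg_mul_log] at h_lim
  refine h_lim.congr' ?_
  filter_upwards [self_mem_nhdsWithin] with x (hx : 0 < x)
  rw [E1_eq_integral_exp_neg_mul_log_sub hx]
  ring
end

section
/- Let α ∼ Exp(1), b a positive integer, D_m > 0, and a finite-state source with variances σ_s² and probabilities P(s). With power allocation γ(σ_s, α) = (1/α)·max{(σ_s²/D_m)^{1/b} − 1, 0} when this quantity is ≤ q, and 0 otherwise, the distortion outage probability Pr(D > D_m) equals Pr(σ_s² > D_m) − Σ_{s : σ_s² > D_m} exp(−((σ_s²/D_m)^{1/b} − 1)/q) · P(s). -/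
open MeasureTheory Real Finset

lemma integral_Ioo_exp_neg (a : ℝ) (ha : 0 ≤ a) :
    ∫ t in Set.Ioo (0:ℝ) a, Real.exp (-t) = 1 - Real.exp (-a) := by
  rw [← MeasureTheory.integral_Ioc_eq_integral_Ioo,
    ← intervalIntegral.integral_of_le ha]
  rw [intervalIntegral.integral_comp_neg (fun x => Real.exp x)]
  rw [integral_exp]
  simp

/-- Distortion outage probability of the source-and-channel adaptive power
scheme over a Rayleigh (`Exp(1)`) channel: with power
`γ(σ_s, α) = (1/α)·max{(σ_s²/D_m)^{1/b} − 1, 0}` when this is `≤ q`, else `0`,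
and distortion `D = D_m` when the power is positive, `D = σ_s²` otherwise,
`Pr(D > D_m) = Pr(σ_s² > D_m) − Σ_{s : σ_s² > D_m} exp(−((σ_s²/D_m)^{1/b}−1)/q)·P(s)`. -/
theorem stmt7 {S : Type*} [Fintype S] (b : ℕ) (hb : 0 < b)
    (Dm q : ℝ) (hDm : 0 < Dm) (hq : 0 < q) (σ2 P : S → ℝ)
    (hσ : ∀ s, 0 < σ2 s) (hP : ∀ s, 0 ≤ P s) (hPsum : ∑ s, P s = 1)
    (γ : S → ℝ → ℝ)
    (hγ : ∀ s, ∀ t : ℝ, 0 < t →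
      γ s t = if (1 / t) * max ((σ2 s / Dm) ^ ((1 : ℝ) / b) - 1) 0 ≤ q
        then (1 / t) * max ((σ2 s / Dm) ^ ((1 : ℝ) / b) - 1) 0 else 0)
    (D : S → ℝ → ℝ)
    (hD : ∀ s, ∀ t : ℝ, 0 < t → D s t = if 0 < γ s t then Dm else σ2 s) :
    (∑ s, P s * ∫ t in {t : ℝ | 0 < t ∧ D s t > Dm}, Real.exp (-t)) =
      (∑ s with σ2 s > Dm, P s) -
        ∑ s with σ2 s > Dm,
          Real.exp (-(((σ2 s / Dm) ^ ((1 : ℝ) / b) - 1) / q)) * P s := by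
  have hval : ∀ s, P s * (∫ t in {t : ℝ | 0 < t ∧ D s t > Dm}, Real.exp (-t)) =
      if σ2 s > Dm then
        (1 - Real.exp (-(((σ2 s / Dm) ^ ((1 : ℝ) / b) - 1) / q))) * P s
      else 0 := by
    intro s
    by_cases hs : σ2 s > Dm
    · set c : ℝ := (σ2 s / Dm) ^ ((1 : ℝ) / b) - 1 with hc
      have hcpos : 0 < c := by
        have h1 : (1:ℝ) < σ2 s / Dm := (one_lt_div hDm).2 hs
        have : (1:ℝ) < (σ2 s / Dm) ^ ((1 : ℝ) / b) := by
          exact (Real.one_lt_rpow_iff_of_pos (by positivity)).2 (Or.inl ⟨h1, by positivity⟩)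
        simpa [hc] using sub_pos.2 this
      have hset : {t : ℝ | 0 < t ∧ D s t > Dm} = Set.Ioo 0 (c / q) := by
        ext t
        simp only [Set.mem_setOf_eq, Set.mem_Ioo]
        constructor
        · rintro ⟨ht, hDt⟩
          refine ⟨ht, ?_⟩
          rw [hD s t ht] at hDt
          by_contra hle
          push_neg at hle
          have hctq : (1 / t) * max c 0 ≤ q := by
            rw [max_eq_left hcpos.le, one_div, inv_mul_eq_div, div_le_iff₀ ht]
            calc c = (c / q) * q := by field_simp
            _ ≤ t * q := by nlinarith
            _ = q * t := by ring
          have hγpos : 0 < γ s t := by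
            rw [hγ s t ht, if_pos hctq, max_eq_left hcpos.le]
            positivity
          rw [if_pos hγpos] at hDt
          exact lt_irrefl _ hDt
        · rintro ⟨ht, hlt⟩
          refine ⟨ht, ?_⟩
          rw [hD s t ht]
          have hctq : ¬ ((1 / t) * max c 0 ≤ q) := by
            rw [max_eq_left hcpos.le, one_div, inv_mul_eq_div, div_le_iff₀ ht]
            intro h
            have : c / q ≤ t := by
              rw [div_le_iff₀ hq]; linarith
            linarith
          have hγz : γ s t = 0 := by rw [hγ s t ht, if_neg hctq]
          simp [hγz, hs]
      rw [hset, if_pos hs, integral_Ioo_exp_neg _ (div_nonneg hcpos.le hq.le)]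
      rw [mul_comm]
    · have hγ0 : ∀ t : ℝ, 0 < t → D s t = σ2 s := by
        intro t ht
        have hmax : max ((σ2 s / Dm) ^ ((1 : ℝ) / b) - 1) 0 = 0 := by
          apply max_eq_right
          have : (σ2 s / Dm) ^ ((1 : ℝ) / b) ≤ 1 := by
            apply Real.rpow_le_one (div_nonneg (hσ s).le hDm.le) _ (by positivity)
            rw [div_le_one hDm]; linarith [not_lt.1 hs]
          linarith
        have : γ s t = 0 := by
          rw [hγ s t ht, hmax, mul_zero, if_pos hq.le]
        rw [hD s t ht, if_neg (by rw [this]; exact lt_irrefl 0)]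
      have hset : {t : ℝ | 0 < t ∧ D s t > Dm} = ∅ := by
        ext t
        simp only [Set.mem_setOf_eq, Set.mem_empty_iff_false, iff_false]
        rintro ⟨ht, hDt⟩
        rw [hγ0 t ht] at hDt
        exact hs hDt
      rw [hset, if_neg hs]
      simp
  calc (∑ s, P s * ∫ t in {t : ℝ | 0 < t ∧ D s t > Dm}, Real.exp (-t))
      = ∑ s, (if σ2 s > Dm then
          (1 - Real.exp (-(((σ2 s / Dm) ^ ((1 : ℝ) / b) - 1) / q))) * P s
        else 0) := by
        exact Finset.sum_congr rfl fun s _ => hval s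
    _ = ∑ s with σ2 s > Dm,
          (1 - Real.exp (-(((σ2 s / Dm) ^ ((1 : ℝ) / b) - 1) / q))) * P s := by
        exact (Finset.sum_filter _ _).symm
    _ = _ := by
        rw [← Finset.sum_sub_distrib]
        exact Finset.sum_congr rfl fun s _ => by ring
end

section
/- Let α ∼ Exp(1) and a > 0. Then E[(a/α) · 1{α ≥ a/q}] = a · E_1(a/q) for every q > 0, and this expectation is finite, while E[a/α] (without truncation) is infinite. -/
open MeasureTheory Real

/-- For `α ∼ Exp(1)` and `a > 0`: the truncated channel-inversion power
`(a/α)·1{α ≥ a/q}` has finite expectation `a·E₁(a/q)` for every `q > 0`, while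
the untruncated power `a/α` has infinite expectation. -/
theorem stmt17 (a : ℝ) (ha : 0 < a) :
    (∀ q : ℝ, 0 < q →
      IntegrableOn (fun t : ℝ => (if a / q ≤ t then a / t else 0) * Real.exp (-t))
        (Set.Ioi 0) ∧
      (∫ t in Set.Ioi (0 : ℝ),
          (if a / q ≤ t then a / t else 0) * Real.exp (-t)) = a * E1 (a / q)) ∧
    ¬ IntegrableOn (fun t : ℝ => (a / t) * Real.exp (-t)) (Set.Ioi 0) := by
  constructor
  · intro q hq
    set c := a / q with hc
    have hc0 : 0 < c := div_pos ha hq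
    have hexp : IntegrableOn (fun t : ℝ => Real.exp (-t)) (Set.Ioi 0) := by
      have := exp_neg_integrableOn_Ioi (0 : ℝ) (one_pos)
      simpa using this
    have hmeas : AEStronglyMeasurable
        (fun t : ℝ => (if c ≤ t then a / t else 0) * Real.exp (-t))
        (volume.restrict (Set.Ioi 0)) := by
      apply Measurable.aestronglyMeasurable
      apply Measurable.mul
      · exact Measurable.ite measurableSet_Ici (measurable_const.div measurable_id)
          measurable_const
      · exact (measurable_id.neg).exp
    have hint : IntegrableOn
        (fun t : ℝ => (if c ≤ t then a / t else 0) * Real.exp (-t)) (Set.Ioi 0) := by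
      apply Integrable.mono' (hexp.const_mul (a / c)) hmeas
      filter_upwards [ae_restrict_mem measurableSet_Ioi] with t ht
      rw [Real.norm_eq_abs, abs_mul, abs_of_pos (exp_pos _)]
      by_cases h : c ≤ t
      · rw [if_pos h, abs_of_nonneg (div_nonneg ha.le (le_trans hc0.le h))]
        gcongr
      · rw [if_neg h]
        simp
        positivity
    refine ⟨hint, ?_⟩
    have heq : (fun t : ℝ => (if c ≤ t then a / t else 0) * Real.exp (-t))
        = Set.indicator (Set.Ici c) (fun t => a / t * Real.exp (-t)) := by
      ext t
      by_cases h : c ≤ t <;> simp [Set.indicator, h]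
    rw [heq, MeasureTheory.setIntegral_indicator measurableSet_Ici]
    have hinter : Set.Ioi (0 : ℝ) ∩ Set.Ici c = Set.Ici c :=
      Set.inter_eq_right.mpr (fun x hx => lt_of_lt_of_le hc0 hx)
    rw [hinter, MeasureTheory.integral_Ici_eq_integral_Ioi]
    rw [E1]
    rw [← MeasureTheory.integral_const_mul]
    congr 1
    ext t
    ring
  · intro h
    have h1 : IntegrableOn (fun t : ℝ => a / t * Real.exp (-t)) (Set.Ioo 0 1) :=
      h.mono_set (fun x hx => hx.1)
    have h2 : IntegrableOn (fun t : ℝ => a * Real.exp (-1) * t⁻¹) (Set.Ioo 0 1) := by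
      apply Integrable.mono' h1
      · exact ((measurable_const.mul measurable_inv).aestronglyMeasurable)
      · filter_upwards [ae_restrict_mem measurableSet_Ioo] with t ht
        have he : a * Real.exp (-1) * t⁻¹ = a / t * Real.exp (-1) := by ring
        rw [Real.norm_eq_abs,
          abs_of_pos (mul_pos (mul_pos ha (Real.exp_pos _)) (inv_pos.mpr ht.1)), he]
        exact mul_le_mul_of_nonneg_left (Real.exp_le_exp.mpr (by linarith [ht.2]))
          (div_nonneg ha.le ht.1.le)
    have h3 := h2.const_mul (a * Real.exp (-1))⁻¹
    simp_rw [inv_mul_cancel_left₀ (by positivity : a * Real.exp (-1) ≠ 0)] at h3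
    have h4 : IntegrableOn (fun t : ℝ => t ^ (-1 : ℝ)) (Set.Ioo (0:ℝ) 1) := by
      simp only [Real.rpow_neg_one]
      exact h3
    rw [intervalIntegral.integrableOn_Ioo_rpow_iff one_pos] at h4
    linarith
end
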